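/- Let f be a submodularity identity for the separator counts: with the setup of minimal i-separators L_i and L_j (i < j), setting N_i = L_i ∩ L_j and N_j = L_i ∪ L_j, one has s_i(L_i) + s_j(L_j) ≥ s_i(N_i) + s_j(N_j), where N_i is an i-separator and N_j is a j-separator. -/

import Mathlib

open scoped Classical

/-- A multigraph: possibly parallel edges and loops, given by source/target maps
(the orientation is irrelevant; walks may traverse edges in either direction). -/
structure Multigraph (V : Type*) (E : Type*) where
  src : E → V
  tgt : E → V

namespace Multigraph

variable {V E V' E' : Type*}

/-- Walks in a multigraph, traversing edges in either direction. -/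
inductive Walk (G : Multigraph V E) : V → V → Type _
  | nil (v : V) : Walk G v v
  | cons {u v w : V} (e : E) (hs : G.src e = u) (ht : G.tgt e = v) (p : Walk G v w) : Walk G u w
  | cons' {u v w : V} (e : E) (hs : G.src e = v) (ht : G.tgt e = u) (p : Walk G v w) : Walk G u w

def Walk.edges {G : Multigraph V E} : ∀ {u v : V}, G.Walk u v → List E
  | _, _, .nil _ => []
  | _, _, .cons e _ _ p => e :: p.edges
  | _, _, .cons' e _ _ p => e :: p.edges

def Walk.support {G : Multigraph V E} : ∀ {u v : V}, G.Walk u v → List V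
  | u, _, .nil _ => [u]
  | u, _, .cons _ _ _ p => u :: p.support
  | u, _, .cons' _ _ _ p => u :: p.support

/-- An edge is incident with a vertex. -/
def Inc (G : Multigraph V E) (e : E) (v : V) : Prop := G.src e = v ∨ G.tgt e = v

/-- The end of an edge other than `v`. -/
noncomputable def otherEnd (G : Multigraph V E) (v : V) (e : E) : V :=
  if G.src e = v then G.tgt e else G.src e

lemma otherEnd_ne (G : Multigraph V E) {v : V} {e : E} (hinc : G.Inc e v)
    (hnl : ¬ (G.src e = v ∧ G.tgt e = v)) : G.otherEnd v e ≠ v := by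
  unfold otherEnd
  split_ifs with h
  · exact fun ht => hnl ⟨h, ht⟩
  · exact fun hs => (hinc.elim h (fun ht => h (by
      exact absurd hs (fun hs' => h hs')))) |>.elim
  
/-- Degree of a vertex (each loop counts twice). -/
noncomputable def degree (G : Multigraph V E) (v : V) : ℕ :=
  Set.ncard {e | G.src e = v} + Set.ncard {e | G.tgt e = v}

/-- The edge cut determined by a vertex set `S`: edges with exactly one end in `S`. -/
def cutEdges (G : Multigraph V E) (S : Set V) : Set E :=
  {e | (G.src e ∈ S ∧ G.tgt e ∉ S) ∨ (G.src e ∉ S ∧ G.tgt e ∈ S)}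

/-- A set `W` is `k`-edge-connected in `G`: no edge cut of size `< k` separates
two vertices of `W`. -/
def EdgeConnSet (G : Multigraph V E) (k : ℕ) (W : Set V) : Prop :=
  ∀ S : Set V, (G.cutEdges S).ncard < k → ∀ x ∈ W, ∀ y ∈ W, (x ∈ S ↔ y ∈ S)

/-- There exist `k` pairwise edge-disjoint paths (trails) from `u` to `v`. -/
def EDWalks (G : Multigraph V E) (u v : V) (k : ℕ) : Prop :=
  ∃ P : Fin k → G.Walk u v, (∀ i, (P i).edges.Nodup) ∧
    ∀ i j, i ≠ j → ∀ e ∈ (P i).edges, e ∉ (P j).edges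

/-- The neighbourhood of `v`: vertices other than `v` joined to `v` by an edge. -/
def nbhd (G : Multigraph V E) (v : V) : Set V :=
  {u | u ≠ v ∧ ∃ e, (G.src e = v ∧ G.tgt e = u) ∨ (G.src e = u ∧ G.tgt e = v)}

/-- A strong immersion of `H` in `G`. -/
structure StrongImm (H : Multigraph V' E') (G : Multigraph V E) where
  vmap : V' → V
  vinj : Function.Injective vmap
  path : ∀ e : E', G.Walk (vmap (H.src e)) (vmap (H.tgt e))
  edges_nodup : ∀ e, (path e).edges.Nodup
  edisj : ∀ e f, e ≠ f → ∀ x ∈ (path e).edges, x ∉ (path f).edges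
  avoid : ∀ (e : E') (u : V'), u ≠ H.src e → u ≠ H.tgt e → vmap u ∉ (path e).support

def StrongImmersion (H : Multigraph V' E') (G : Multigraph V E) : Prop :=
  Nonempty (StrongImm H G)

/-- A weak immersion of `H` in `G`. -/
structure WeakImm (H : Multigraph V' E') (G : Multigraph V E) where
  vmap : V' → V
  vinj : Function.Injective vmap
  path : ∀ e : E', G.Walk (vmap (H.src e)) (vmap (H.tgt e))
  edges_nodup : ∀ e, (path e).edges.Nodup
  edisj : ∀ e f, e ≠ f → ∀ x ∈ (path e).edges, x ∉ (path f).edges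

def WeakImmersion (H : Multigraph V' E') (G : Multigraph V E) : Prop :=
  Nonempty (WeakImm H G)

/-- The complete graph `K n` as a multigraph. -/
def completeMG (n : ℕ) : Multigraph (Fin n) {p : Fin n × Fin n // p.1 < p.2} :=
  ⟨fun p => p.1.1, fun p => p.1.2⟩

/-- A path-like decomposition of the part of `G` induced on `S`, with respect to
an ordered set `X ⊆ S`: an ordering of `X` and a near-partition of `S \ X` into bags. -/
structure PathLikeDecomp (G : Multigraph V E) (S : Set V) (X : Set V) where
  t : ℕ
  ord : Fin t → V
  ord_inj : Function.Injective ord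
  ord_range : Set.range ord = X
  bag : Fin (t + 1) → Set V
  bag_disj : ∀ i j, i ≠ j → Disjoint (bag i) (bag j)
  bag_union : (⋃ i, bag i) = S \ X

namespace PathLikeDecomp

variable {G : Multigraph V E} {S X : Set V} (P : PathLikeDecomp G S X)

/-- Vertices strictly to the left of the `i`-th ordered vertex. -/
def leftSet (i : Fin P.t) : Set V :=
  {v | ∃ j, j < i ∧ v = P.ord j} ∪ ⋃ (j : Fin (P.t + 1)) (_ : (j : ℕ) ≤ (i : ℕ)), P.bag j

/-- Vertices strictly to the right of the `i`-th ordered vertex. -/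
def rightSet (i : Fin P.t) : Set V :=
  {v | ∃ j, i < j ∧ v = P.ord j} ∪ ⋃ (j : Fin (P.t + 1)) (_ : (i : ℕ) < (j : ℕ)), P.bag j

/-- The `x_i`-cut of the decomposition. -/
def cutAt (i : Fin P.t) : Set E :=
  {e | (G.src e ∈ P.leftSet i ∧ G.tgt e ∈ P.rightSet i) ∨
       (G.src e ∈ P.rightSet i ∧ G.tgt e ∈ P.leftSet i)}

/-- The decomposition has width less than `w`. -/
def WidthLt (w : ℕ) : Prop := ∀ i, (P.cutAt i).ncard < w

/-- A set `Z` is `p`-bounded in the decomposition. -/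
def Bounded (p : ℕ) (Z : Set V) : Prop :=
  (X ∩ Z).ncard + Set.ncard {j : Fin (P.t + 1) | (P.bag j ∩ Z).Nonempty} ≤ p

end PathLikeDecomp

/-- `W` is `(a,w,p)`-linear in `G`. -/
def Linear (G : Multigraph V E) (W : Set V) (a w p : ℕ) : Prop :=
  ∃ A : Set V, A ⊆ W ∧ A.ncard ≤ a ∧
    ∃ P : PathLikeDecomp G {v | v ∉ A} (W \ A), P.WidthLt w ∧
      ∀ v ∈ A, P.Bounded p (G.nbhd v)

/-- A graph is `α`-basic if the set of its vertices of degree at least `α` is `α`-linear. -/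
def Basic (G : Multigraph V E) (α : ℕ) : Prop :=
  Linear G {v | α ≤ G.degree v} α α α

/-- A tree-cut decomposition of `G` indexed by a tree on `τ`. -/
structure TreeCutDecomp (G : Multigraph V E) (τ : Type*) where
  tree : SimpleGraph τ
  tree_isTree : tree.IsTree
  bag : τ → Set V
  bag_disj : ∀ i j, i ≠ j → Disjoint (bag i) (bag j)
  bag_union : (⋃ i, bag i) = Set.univ

namespace TreeCutDecomp

variable {τ : Type*} {G : Multigraph V E} (D : TreeCutDecomp G τ)

/-- The union of the bags on the `v`-side of the tree edge `uv`. -/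
def sideVerts (u v : τ) : Set V :=
  ⋃ (x : τ) (_ : (D.tree.deleteEdges {s(u, v)}).Reachable v x), D.bag x

/-- The edge cut of `G` determined by the tree edge `uv`. -/
def edgeCut (u v : τ) : Set E := G.cutEdges (D.sideVerts u v)

/-- The adhesion of the decomposition. -/
noncomputable def adhesion : ℕ :=
  sSup {n | ∃ u v, D.tree.Adj u v ∧ n = (D.edgeCut u v).ncard}

/-- The decomposition has adhesion less than `α`. -/
def AdhesionLt (α : ℕ) : Prop := ∀ u v, D.tree.Adj u v → (D.edgeCut u v).ncard < α

lemma exists_bag (v : V) : ∃ t, v ∈ D.bag t :=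
  Set.mem_iUnion.mp (D.bag_union.symm ▸ Set.mem_univ v)

/-- The tree node whose bag contains `v`. -/
noncomputable def nodeOf (v : V) : τ := (D.exists_bag v).choose

lemma nodeOf_mem (v : V) : v ∈ D.bag (D.nodeOf v) := (D.exists_bag v).choose_spec

/-- Connected components of the tree with node `t` removed. -/
def PeriphComp (t : τ) := (D.tree.induce {x : τ | x ≠ t}).ConnectedComponent

/-- Vertices of the torso at `t`: core vertices and peripheral vertices. -/
def TorsoV (t : τ) := {v : V // v ∈ D.bag t} ⊕ D.PeriphComp t

/-- The consolidation map onto the torso at `t`. -/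
noncomputable def torsoProj (t : τ) (v : V) : D.TorsoV t :=
  if h : v ∈ D.bag t then Sum.inl ⟨v, h⟩
  else Sum.inr ((D.tree.induce {x : τ | x ≠ t}).connectedComponentMk
    ⟨D.nodeOf v, fun he => h (he ▸ D.nodeOf_mem v)⟩)

/-- Edges of the torso at `t`: all edges except the loops created by consolidation. -/
def TorsoE (t : τ) :=
  {e : E // ∀ c : D.PeriphComp t,
    ¬ (D.torsoProj t (G.src e) = Sum.inr c ∧ D.torsoProj t (G.tgt e) = Sum.inr c)}

/-- The torso of the tree-cut decomposition at `t`. -/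
noncomputable def torso (t : τ) : Multigraph (D.TorsoV t) (D.TorsoE t) :=
  ⟨fun e => D.torsoProj t (G.src e.1), fun e => D.torsoProj t (G.tgt e.1)⟩

end TreeCutDecomp

/-- A witness that `G` is a `k`-edge sum of `G₁` and `G₂`. -/
structure EdgeSumWitness (G : Multigraph V E) {V₁ E₁ V₂ E₂ : Type*}
    (G₁ : Multigraph V₁ E₁) (G₂ : Multigraph V₂ E₂) (k : ℕ) where
  v₁ : V₁
  v₂ : V₂
  noloop₁ : ∀ e, ¬ (G₁.src e = v₁ ∧ G₁.tgt e = v₁)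
  noloop₂ : ∀ e, ¬ (G₂.src e = v₂ ∧ G₂.tgt e = v₂)
  deg₁ : G₁.degree v₁ = k
  deg₂ : G₂.degree v₂ = k
  π : {e : E₁ // G₁.Inc e v₁} ≃ {e : E₂ // G₂.Inc e v₂}
  φ : V ≃ ({x : V₁ // x ≠ v₁} ⊕ {x : V₂ // x ≠ v₂})
  ψ : E ≃ ({e : E₁ // ¬ G₁.Inc e v₁} ⊕ {e : E₂ // ¬ G₂.Inc e v₂} ⊕ {e : E₁ // G₁.Inc e v₁})
  ends₁ : ∀ (e : E) (e₁ : {e : E₁ // ¬ G₁.Inc e v₁}), ψ e = Sum.inl e₁ →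
    s(G.src e, G.tgt e) =
      s(φ.symm (Sum.inl ⟨G₁.src e₁.1, fun h => e₁.2 (Or.inl h)⟩),
        φ.symm (Sum.inl ⟨G₁.tgt e₁.1, fun h => e₁.2 (Or.inr h)⟩))
  ends₂ : ∀ (e : E) (e₂ : {e : E₂ // ¬ G₂.Inc e v₂}), ψ e = Sum.inr (Sum.inl e₂) →
    s(G.src e, G.tgt e) =
      s(φ.symm (Sum.inr ⟨G₂.src e₂.1, fun h => e₂.2 (Or.inl h)⟩),
        φ.symm (Sum.inr ⟨G₂.tgt e₂.1, fun h => e₂.2 (Or.inr h)⟩))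
  ends_cross : ∀ (e : E) (e₁ : {e : E₁ // G₁.Inc e v₁}), ψ e = Sum.inr (Sum.inr e₁) →
    s(G.src e, G.tgt e) =
      s(φ.symm (Sum.inl ⟨G₁.otherEnd v₁ e₁.1, G₁.otherEnd_ne e₁.2 (noloop₁ e₁.1)⟩),
        φ.symm (Sum.inr ⟨G₂.otherEnd v₂ (π e₁).1, G₂.otherEnd_ne (π e₁).2 (noloop₂ (π e₁).1)⟩))

/-- `G` is a `k`-edge sum of `G₁` and `G₂`. -/
def IsEdgeSum (G : Multigraph V E) {V₁ E₁ V₂ E₂ : Type*}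
    (G₁ : Multigraph V₁ E₁) (G₂ : Multigraph V₂ E₂) (k : ℕ) : Prop :=
  Nonempty (EdgeSumWitness G G₁ G₂ k)

/-- A witness of an edge sum is grounded. -/
def EdgeSumWitness.Grounded {V₁ E₁ V₂ E₂ : Type*} {G : Multigraph V E}
    {G₁ : Multigraph V₁ E₁} {G₂ : Multigraph V₂ E₂} {k : ℕ}
    (wit : EdgeSumWitness G G₁ G₂ k) : Prop :=
  (∃ v₁' : V₁, v₁' ≠ wit.v₁ ∧ G₁.EDWalks wit.v₁ v₁' k) ∧
  (∃ v₂' : V₂, v₂' ≠ wit.v₂ ∧ G₂.EDWalks wit.v₂ v₂' k)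

/-- The graph obtained from `G` by consolidating the set `S` to a single vertex. -/
noncomputable def consolidate (G : Multigraph V E) (S : Set V) :
    Multigraph ({v : V // v ∉ S} ⊕ Unit) {e : E // ¬ (G.src e ∈ S ∧ G.tgt e ∈ S)} where
  src := fun e => if h : G.src e.1 ∈ S then Sum.inr () else Sum.inl ⟨G.src e.1, h⟩
  tgt := fun e => if h : G.tgt e.1 ∈ S then Sum.inr () else Sum.inl ⟨G.tgt e.1, h⟩

/-- The auxiliary adjacency: `m` pairwise edge-disjoint `x`–`y` paths avoiding `W ∖ {x,y}`. -/
def auxAdj (G : Multigraph V E) (W : Set V) (m : ℕ) (x y : V) : Prop :=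
  x ∈ W ∧ y ∈ W ∧ ∃ P : Fin m → G.Walk x y, (∀ i, (P i).edges.Nodup) ∧
    (∀ i j, i ≠ j → ∀ e ∈ (P i).edges, e ∉ (P j).edges) ∧
    (∀ i, ∀ v ∈ (P i).support, v ∈ W → v = x ∨ v = y)

/-- The auxiliary simple graph `G(m, W)`. -/
def auxGraph (G : Multigraph V E) (W : Set V) (m : ℕ) : SimpleGraph V where
  Adj x y := x ≠ y ∧ (G.auxAdj W m x y ∨ G.auxAdj W m y x)
  symm := ⟨fun x y h => ⟨h.1.symm, h.2.symm⟩⟩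
  loopless := ⟨fun x h => h.1 rfl⟩

end Multigraph

/-- `H` contains `K_{1,k}` as a minor: a centre branch set joined to `k` pairwise
disjoint branch sets, all inducing connected subgraphs. -/
def SimpleGraph.HasStarMinor {V : Type*} (H : SimpleGraph V) (k : ℕ) : Prop :=
  ∃ C : Fin (k + 1) → Set V, (∀ i, (C i).Nonempty) ∧
    (∀ i, (H.induce (C i)).Connected) ∧
    (∀ i j, i ≠ j → Disjoint (C i) (C j)) ∧
    (∀ i, i ≠ 0 → ∃ u ∈ C 0, ∃ v ∈ C i, H.Adj u v)

namespace Multigraph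

/-- `Z` is an `i`-separator (with respect to `A` and the ordering `x₁, …, x_t`). -/
def ISep {V E : Type*} (_G : Multigraph V E) (A : Set V) (x : ℕ → V) (t i : ℕ)
    (Z : Set V) : Prop :=
  (∀ v ∈ Z, v ∉ A) ∧ x i ∉ Z ∧ (∀ j, 1 ≤ j → j < i → x j ∈ Z) ∧
    (∀ j, i < j → j ≤ t → x j ∉ Z)

/-- `s_i(Z)`: the number of edges of `G − A` with one end in `Z` and the other end in
`V(G−A) ∖ (Z ∪ {x_i})`. -/
noncomputable def sepCount {V E : Type*} (G : Multigraph V E) (A : Set V) (x : ℕ → V)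
    (i : ℕ) (Z : Set V) : ℕ :=
  Set.ncard {e : E | G.src e ∉ A ∧ G.tgt e ∉ A ∧
    ((G.src e ∈ Z ∧ G.tgt e ∉ Z ∧ G.tgt e ≠ x i) ∨
     (G.tgt e ∈ Z ∧ G.src e ∉ Z ∧ G.src e ≠ x i))}

end Multigraph

/-! Write `P_a(Z)` for the edges of `G - A` leaving `Z` other than towards `a`, so that
`s_i(Z) = |P_{x_i}(Z)|`. An edge in both `P_{x_i}(L_i ∩ L_j)` and `P_{x_j}(L_i ∪ L_j)` goes
from `L_i ∩ L_j` to the outside of `L_i ∪ L_j`, hence lies in `P_{x_i}(L_i) ∩ P_{x_j}(L_j)`.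
Because `x_i ∈ L_j` and `x_j ∉ L_i ∪ L_j`, an edge in one of the left-hand sets lies in one of
the right-hand sets. Then `|P| + |Q| = |P ∪ Q| + |P ∩ Q|` gives the inequality. -/

theorem Set.ncard_add_ncard_le_of_union_subset_of_inter_subset {α : Type*}
    {P Q P' Q' : Set α} (hP' : P'.Finite) (hQ' : Q'.Finite)
    (hunion : P ∪ Q ⊆ P' ∪ Q') (hinter : P ∩ Q ⊆ P' ∩ Q') :
    P.ncard + Q.ncard ≤ P'.ncard + Q'.ncard := by
  have hfin : (P ∪ Q).Finite := (hP'.union hQ').subset hunion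
  calc P.ncard + Q.ncard = (P ∪ Q).ncard + (P ∩ Q).ncard :=
        (Set.ncard_union_add_ncard_inter P Q (hfin.subset subset_union_left)
          (hfin.subset subset_union_right)).symm
    _ ≤ (P' ∪ Q').ncard + (P' ∩ Q').ncard :=
        add_le_add (Set.ncard_le_ncard hunion (hP'.union hQ'))
          (Set.ncard_le_ncard hinter (hP'.inter_of_left Q'))
    _ = P'.ncard + Q'.ncard := Set.ncard_union_add_ncard_inter P' Q' hP' hQ'

namespace Multigraph

variable {V E : Type*}

namespace ISep

variable {G : Multigraph V E} {A : Set V} {x : ℕ → V} {t i j : ℕ} {Li Lj : Set V}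

theorem inter (hLi : G.ISep A x t i Li) (hLj : G.ISep A x t j Lj) (hij : i < j) :
    G.ISep A x t i (Li ∩ Lj) :=
  ⟨fun v hv => hLi.1 v hv.1, fun h => hLi.2.1 h.1,
    fun k hk1 hki => ⟨hLi.2.2.1 k hk1 hki, hLj.2.2.1 k hk1 (hki.trans hij)⟩,
    fun k hki hkt h => hLi.2.2.2 k hki hkt h.1⟩

theorem union (hLi : G.ISep A x t i Li) (hLj : G.ISep A x t j Lj) (hij : i < j)
    (hjt : j ≤ t) : G.ISep A x t j (Li ∪ Lj) :=
  ⟨fun v hv => hv.elim (hLi.1 v) (hLj.1 v),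
    fun h => h.elim (hLi.2.2.2 j hij hjt) hLj.2.1,
    fun k hk1 hkj => Or.inr (hLj.2.2.1 k hk1 hkj),
    fun k hkj hkt h => h.elim (hLi.2.2.2 k (hij.trans hkj) hkt) (hLj.2.2.2 k hkj hkt)⟩

end ISep

def sepEdges (G : Multigraph V E) (A : Set V) (a : V) (Z : Set V) : Set E :=
  {e | G.src e ∉ A ∧ G.tgt e ∉ A ∧
    ((G.src e ∈ Z ∧ G.tgt e ∉ Z ∧ G.tgt e ≠ a) ∨
     (G.tgt e ∈ Z ∧ G.src e ∉ Z ∧ G.src e ≠ a))}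

theorem sepCount_eq_ncard_sepEdges (G : Multigraph V E) (A : Set V) (x : ℕ → V) (i : ℕ)
    (Z : Set V) : G.sepCount A x i Z = (G.sepEdges A (x i) Z).ncard :=
  rfl

section Submodular

variable (G : Multigraph V E) (A : Set V) {a b : V} {S T : Set V}

theorem sepEdges_inter_union_subset_union (haT : a ∈ T) (hbS : b ∉ S) (hbT : b ∉ T) :
    G.sepEdges A a (S ∩ T) ∪ G.sepEdges A b (S ∪ T) ⊆ G.sepEdges A a S ∪ G.sepEdges A b T := by
  intro e he
  simp only [sepEdges, Set.mem_union, Set.mem_inter_iff, Set.mem_ofPred_eq] at he ⊢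
  grind

theorem sepEdges_inter_inter_union_subset_inter :
    G.sepEdges A a (S ∩ T) ∩ G.sepEdges A b (S ∪ T) ⊆ G.sepEdges A a S ∩ G.sepEdges A b T := by
  intro e he
  simp only [sepEdges, Set.mem_union, Set.mem_inter_iff, Set.mem_ofPred_eq] at he ⊢
  grind

theorem ncard_sepEdges_inter_add_union_le [Finite E] (haT : a ∈ T) (hbS : b ∉ S)
    (hbT : b ∉ T) :
    (G.sepEdges A a (S ∩ T)).ncard + (G.sepEdges A b (S ∪ T)).ncard ≤
      (G.sepEdges A a S).ncard + (G.sepEdges A b T).ncard :=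
  Set.ncard_add_ncard_le_of_union_subset_of_inter_subset (Set.toFinite _) (Set.toFinite _)
    (G.sepEdges_inter_union_subset_union A haT hbS hbT)
    (G.sepEdges_inter_inter_union_subset_inter A)

end Submodular

end Multigraph

theorem separator_submodular_exchange_general {V E : Type*} [Fintype E]
    (G : Multigraph V E) (A : Set V) (x : ℕ → V) (t : ℕ)
    (i j : ℕ) (h2i : 2 ≤ i) (hij : i < j) (hjt : j ≤ t - 1)
    (Li Lj : Set V)
    (hLi : Multigraph.ISep G A x t i Li) (hLj : Multigraph.ISep G A x t j Lj) :
    Multigraph.ISep G A x t i (Li ∩ Lj) ∧ Multigraph.ISep G A x t j (Li ∪ Lj) ∧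
      Multigraph.sepCount G A x i (Li ∩ Lj) + Multigraph.sepCount G A x j (Li ∪ Lj) ≤
        Multigraph.sepCount G A x i Li + Multigraph.sepCount G A x j Lj := by
  have hjt' : j ≤ t := hjt.trans (Nat.sub_le t 1)
  have hxi_mem_Lj : x i ∈ Lj := hLj.2.2.1 i (by omega) hij
  have hxj_not_mem_Li : x j ∉ Li := hLi.2.2.2 j hij hjt'
  refine ⟨hLi.inter hLj hij, hLi.union hLj hij hjt', ?_⟩
  simp only [Multigraph.sepCount_eq_ncard_sepEdges]
  exact G.ncard_sepEdges_inter_add_union_le A hxi_mem_Lj hxj_not_mem_Li hLj.2.1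

/-- submodularity exchange: `N_i = L_i ∩ L_j` is an `i`-separator,
`N_j = L_i ∪ L_j` is a `j`-separator, and `s_i(N_i) + s_j(N_j) ≤ s_i(L_i) + s_j(L_j)`. -/
theorem separator_submodular_exchange {V E : Type*} [Fintype V] [Fintype E]
    (G : Multigraph V E) (A : Set V) (x : ℕ → V) (t : ℕ)
    (hinj : Set.InjOn x (Set.Icc 1 t)) (hxA : ∀ j ∈ Set.Icc 1 t, x j ∉ A)
    (i j : ℕ) (h2i : 2 ≤ i) (hij : i < j) (hjt : j ≤ t - 1)
    (Li Lj : Set V)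
    (hLi : Multigraph.ISep G A x t i Li) (hLj : Multigraph.ISep G A x t j Lj) :
    Multigraph.ISep G A x t i (Li ∩ Lj) ∧ Multigraph.ISep G A x t j (Li ∪ Lj) ∧
      Multigraph.sepCount G A x i (Li ∩ Lj) + Multigraph.sepCount G A x j (Li ∪ Lj) ≤
        Multigraph.sepCount G A x i Li + Multigraph.sepCount G A x j Lj :=
  separator_submodular_exchange_general G A x t i j h2i hij hjt Li Lj hLi hLj
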